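/- For every fixed L ∈ (0, 2π) there exists a unique k₀ = k₀(L) ∈ (0,1) such that r(k₀,L) = 0, and moreover r(k,L) < 0 for all k ∈ (0, k₀) and r(k,L) > 0 for all k ∈ (k₀, 1). -/

import Mathlib

open Real

/-- Complete elliptic integral of the first kind. -/
noncomputable def ellipticK (k : ℝ) : ℝ :=
  ∫ θ in (0:ℝ)..(π/2), 1 / Real.sqrt (1 - k^2 * Real.sin θ^2)

/-- Complete elliptic integral of the second kind. -/
noncomputable def ellipticE (k : ℝ) : ℝ :=
  ∫ θ in (0:ℝ)..(π/2), Real.sqrt (1 - k^2 * Real.sin θ^2)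

/-- The stability function `r(k,L)`. -/
noncomputable def rStab (k L : ℝ) : ℝ :=
  k^2 * L^2 - 16 * (1 - k^2) * (k^2 * (ellipticK k)^2 - (ellipticK k - ellipticE k)^2)

/-!
With `D = (K - E) / k²` one has `r(k, L) = k² (L² - φ(k))`, where `φ(k) = 16 (1 - k²)(K² - k² D²)`.
The factor `(1 - k²)(K² - k² D²)` is the integral over `[0, π/2]²` of
`(1 - k²)(1 - k² sin²α sin²β) / √((1 - k² sin²α)(1 - k² sin²β))`, an integrand that is strictly
decreasing in `k²`, so `φ` is strictly decreasing on `[0, 1)`. It is continuous, `φ(0) = 4π²` and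
`φ(k) ≤ 8π² √(1 - k²) → 0` as `k → 1`; hence for `L² ∈ (0, 4π²)` there is exactly one `k₀` with
`φ(k₀) = L²`, and `r(k, L)` has the sign of `k - k₀`.
-/

open Set Filter Topology intervalIntegral

lemma sin_sq_lt_one_of_mem_Ioo {x : ℝ} (hx : x ∈ Ioo (-(π/2)) (π/2)) : sin x^2 < 1 := by
  nlinarith [sin_sq_add_cos_sq x, cos_pos_of_mem_Ioo hx]

lemma integral_lt_integral_of_lt_on_Ioo {f g : ℝ → ℝ} {a b : ℝ} (hab : a < b)
    (hf : Continuous f) (hg : Continuous g) (h : ∀ x ∈ Ioo a b, f x < g x) :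
    ∫ x in a..b, f x < ∫ x in a..b, g x := by
  have := intervalIntegral_pos_of_pos_on (f := fun x => g x - f x)
    ((hg.sub hf).intervalIntegrable a b) (fun x hx => sub_pos.2 (h x hx)) hab
  rwa [integral_sub (hg.intervalIntegrable a b) (hf.intervalIntegrable a b), sub_pos] at this

noncomputable def criticalKernel (t a b : ℝ) : ℝ :=
  (1 - t) * (1 - t * (a * b)) / √((1 - t * a) * (1 - t * b))

lemma criticalKernel_strictAntiOn {a b : ℝ} (ha : a ∈ Ico 0 1) (hb : b ∈ Ico 0 1) :
    StrictAntiOn (criticalKernel · a b) (Ico 0 1) := by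
  intro t₁ ht₁ t₂ ht₂ h
  set c := a * b
  have hc : c ∈ Ico 0 1 := ⟨mul_nonneg ha.1 hb.1, by nlinarith [ha.1, hb.1, ha.2, hb.2]⟩
  have hden : ∀ x ∈ Ico (0:ℝ) 1, ∀ t ∈ Ico (0:ℝ) 1, 0 < 1 - t * x := fun x hx t ht =>
    sub_pos.2 (mul_lt_one_of_nonneg_of_lt_one_left ht.1 ht.2 hx.2.le)
  have hnum : ∀ t ∈ Ico (0:ℝ) 1, 0 ≤ (1 - t) * (1 - t * c) := fun t ht =>
    (mul_pos (by linarith [ht.2]) (hden c hc t ht)).le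
  have hq : ∀ t ∈ Ico (0:ℝ) 1, criticalKernel t a b
      = √((1 - t) * (1 - t * c) / (1 - t * a) * ((1 - t) * (1 - t * c) / (1 - t * b))) :=
    fun t ht => by
      rw [div_mul_div_comm, ← sq, Real.sqrt_div (sq_nonneg _), Real.sqrt_sq (hnum t ht),
        criticalKernel]
  have hq_lt : ∀ x ∈ Ico (0:ℝ) 1, (1 - t₂) * (1 - t₂ * c) / (1 - t₂ * x)
      < (1 - t₁) * (1 - t₁ * c) / (1 - t₁ * x) := fun x hx => by
    rw [div_lt_div_iff₀ (hden x hx t₂ ht₂) (hden x hx t₁ ht₁)]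
    have : 0 < (t₂ - t₁) * ((1 - x) * (1 - c * (t₁ * t₂)) + c * ((1 - t₁) * (1 - t₂))) := by
      refine mul_pos (sub_pos.2 h) (add_pos_of_pos_of_nonneg
        (mul_pos (by linarith [hx.2]) ?_) (mul_nonneg hc.1 ?_))
      · nlinarith [mul_le_mul ht₁.2.le ht₂.2.le ht₂.1 zero_le_one, hc.1, hc.2, ht₁.1]
      · nlinarith [ht₁.2, ht₂.2]
    -- the two cross-multiplied sides differ by exactly this product
    linear_combination this
  have hq_nonneg : ∀ x ∈ Ico (0:ℝ) 1, 0 ≤ (1 - t₂) * (1 - t₂ * c) / (1 - t₂ * x) :=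
    fun x hx => div_nonneg (hnum t₂ ht₂) (hden x hx t₂ ht₂).le
  show criticalKernel t₂ a b < criticalKernel t₁ a b
  rw [hq t₁ ht₁, hq t₂ ht₂]
  exact Real.sqrt_lt_sqrt (mul_nonneg (hq_nonneg a ha) (hq_nonneg b hb))
    (mul_lt_mul'' (hq_lt a ha) (hq_lt b hb) (hq_nonneg a ha) (hq_nonneg b hb))

noncomputable def ellipticD (k : ℝ) : ℝ :=
  ∫ θ in (0:ℝ)..(π/2), sin θ^2 / √(1 - k^2 * sin θ^2)

section EllipticIntegrals

variable {k : ℝ}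

lemma one_sub_sq_mul_sin_sq_pos (hk : k^2 < 1) (θ : ℝ) : 0 < 1 - k^2 * sin θ^2 := by
  nlinarith [sin_sq_le_one θ, sq_nonneg k, sq_nonneg (sin θ)]

lemma continuous_div_sqrt_one_sub {g : ℝ → ℝ} (hg : Continuous g) (hk : k^2 < 1) :
    Continuous fun θ => g θ / √(1 - k^2 * sin θ^2) :=
  hg.div (by fun_prop) fun θ => (Real.sqrt_pos.2 (one_sub_sq_mul_sin_sq_pos hk θ)).ne'

lemma integral_eq_mul_ellipticK_sub_mul_ellipticD (hk : k^2 < 1) (a b : ℝ) :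
    ∫ θ in (0:ℝ)..(π/2), (a * (1 / √(1 - k^2 * sin θ^2)) - b * (sin θ^2 / √(1 - k^2 * sin θ^2)))
      = a * ellipticK k - b * ellipticD k := by
  rw [integral_sub, integral_const_mul, integral_const_mul, ellipticK, ellipticD]
  all_goals exact
    ((continuous_div_sqrt_one_sub (by fun_prop) hk).const_mul _).intervalIntegrable _ _

lemma ellipticK_sub_ellipticE (hk : k^2 < 1) : ellipticK k - ellipticE k = k^2 * ellipticD k := by
  rw [ellipticK, ellipticE, ellipticD, ← integral_sub
    ((continuous_div_sqrt_one_sub continuous_const hk).intervalIntegrable _ _)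
    ((by fun_prop : Continuous fun θ => √(1 - k^2 * sin θ^2)).intervalIntegrable _ _),
    ← integral_const_mul]
  refine integral_congr fun θ _ => ?_
  have hpos := one_sub_sq_mul_sin_sq_pos hk θ
  field_simp
  rw [Real.sq_sqrt hpos.le]
  ring

lemma pi_div_two_le_ellipticK (hk : k^2 < 1) : π/2 ≤ ellipticK k := by
  have h : ∫ _ in (0:ℝ)..(π/2), (1:ℝ) ≤ ellipticK k :=
    integral_mono_on pi_div_two_pos.le intervalIntegrable_const
      ((continuous_div_sqrt_one_sub continuous_const hk).intervalIntegrable _ _) fun θ _ => by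
        rw [le_div_iff₀ (Real.sqrt_pos.2 (one_sub_sq_mul_sin_sq_pos hk θ)), one_mul]
        exact Real.sqrt_le_one.2 (by nlinarith [sq_nonneg k, sq_nonneg (sin θ)])
  simpa using h

lemma sqrt_one_sub_sq_mul_ellipticK_le (hk : k^2 < 1) : √(1 - k^2) * ellipticK k ≤ π/2 := by
  have h : ∫ θ in (0:ℝ)..(π/2), √(1 - k^2) * (1 / √(1 - k^2 * sin θ^2))
      ≤ ∫ _ in (0:ℝ)..(π/2), (1:ℝ) :=
    integral_mono_on pi_div_two_pos.le
      (((continuous_div_sqrt_one_sub continuous_const hk).const_mul _).intervalIntegrable _ _)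
      intervalIntegrable_const fun θ _ => by
        rw [mul_one_div, div_le_one (Real.sqrt_pos.2 (one_sub_sq_mul_sin_sq_pos hk θ))]
        exact Real.sqrt_le_sqrt (by nlinarith [sin_sq_le_one θ, sq_nonneg k])
  simpa [ellipticK, integral_const_mul] using h

lemma ellipticD_nonneg : 0 ≤ ellipticD k :=
  integral_nonneg (by positivity) fun θ _ => by positivity

lemma ellipticD_le_ellipticK (hk : k^2 < 1) : ellipticD k ≤ ellipticK k :=
  integral_mono_on pi_div_two_pos.le
    ((continuous_div_sqrt_one_sub (by fun_prop) hk).intervalIntegrable _ _)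
    ((continuous_div_sqrt_one_sub continuous_const hk).intervalIntegrable _ _)
    fun θ _ => by gcongr; exact sin_sq_le_one θ

lemma ellipticK_sub_mul_ellipticD_le (hk0 : 0 ≤ k) (hk : k^2 < 1) :
    ellipticK k - k * ellipticD k ≤ π/2 := by
  have h : ∫ θ in (0:ℝ)..(π/2),
      (1 * (1 / √(1 - k^2 * sin θ^2)) - k * (sin θ^2 / √(1 - k^2 * sin θ^2)))
      ≤ ∫ _ in (0:ℝ)..(π/2), (1:ℝ) :=
    integral_mono_on pi_div_two_pos.le
      ((((continuous_div_sqrt_one_sub continuous_const hk).const_mul 1).sub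
        ((continuous_div_sqrt_one_sub (by fun_prop) hk).const_mul k)).intervalIntegrable _ _)
      intervalIntegrable_const fun θ _ => by
        rw [one_mul, mul_div_assoc', ← sub_div,
          div_le_one (Real.sqrt_pos.2 (one_sub_sq_mul_sin_sq_pos hk θ))]
        -- `(1 - k s)² ≤ 1 - k² s` for `s = sin² θ ∈ [0, 1]` and `0 ≤ k ≤ 1`
        have hk1 : k ≤ 1 := by nlinarith
        have hks : k * sin θ^2 ≤ 1 := mul_le_one₀ hk1 (sq_nonneg _) (sin_sq_le_one θ)
        refine Real.le_sqrt_of_sq_le ?_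
        nlinarith [mul_nonneg (mul_nonneg hk0 (sq_nonneg (sin θ)))
          (by linarith : 0 ≤ 2 - k * sin θ^2 - k)]
  rw [integral_eq_mul_ellipticK_sub_mul_ellipticD hk] at h
  simpa using h

end EllipticIntegrals

lemma continuousOn_integral_div_sqrt_one_sub {g : ℝ → ℝ} (hg : Continuous g) :
    ContinuousOn (fun k => ∫ θ in (0:ℝ)..(π/2), g θ / √(1 - k^2 * sin θ^2)) (Ioo (-1) 1) := by
  intro k hk
  obtain ⟨b, hkb, hb1⟩ := exists_between (abs_lt.2 hk)
  have hb : 0 < 1 - b^2 := by nlinarith [abs_nonneg k]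
  -- Near `k` the radicand stays above `1 - b² > 0`; clamping it there gives a jointly
  -- continuous integrand without changing the integral.
  have hF : Continuous fun k =>
      ∫ θ in (0:ℝ)..(π/2), g θ / √(max (1 - b^2) (1 - k^2 * sin θ^2)) :=
    continuous_parametric_intervalIntegral_of_continuous'
      ((hg.comp continuous_snd).div (by fun_prop)
        fun p => (Real.sqrt_pos.2 (hb.trans_le (le_max_left _ _))).ne') _ _
  refine (hF.continuousAt.congr ?_).continuousWithinAt
  filter_upwards [Ioo_mem_nhds (neg_lt_of_abs_lt hkb) (lt_of_abs_lt hkb)] with k' hk'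
  refine integral_congr fun θ _ => ?_
  have : k'^2 ≤ b^2 := (sq_lt_sq' hk'.1 hk'.2).le
  rw [max_eq_right (by nlinarith [sin_sq_le_one θ, sq_nonneg k', sq_nonneg (sin θ)])]

section CriticalPeriod

variable {k : ℝ}

noncomputable def criticalPeriodSq (k : ℝ) : ℝ :=
  16 * (1 - k^2) * (ellipticK k ^ 2 - k^2 * ellipticD k ^ 2)

lemma rStab_eq_sq_mul (hk : k^2 < 1) (L : ℝ) : rStab k L = k^2 * (L^2 - criticalPeriodSq k) := by
  rw [rStab, ellipticK_sub_ellipticE hk, criticalPeriodSq]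
  ring

lemma criticalPeriodSq_zero : criticalPeriodSq 0 = 4 * π^2 := by
  simp [criticalPeriodSq, ellipticK]
  ring

lemma continuousOn_criticalPeriodSq : ContinuousOn criticalPeriodSq (Ioo (-1) 1) := by
  have hK : ContinuousOn ellipticK (Ioo (-1) 1) :=
    continuousOn_integral_div_sqrt_one_sub continuous_const
  have hD : ContinuousOn ellipticD (Ioo (-1) 1) :=
    continuousOn_integral_div_sqrt_one_sub (by fun_prop)
  unfold criticalPeriodSq
  fun_prop

lemma criticalPeriodSq_le_mul_sqrt (hk0 : 0 ≤ k) (hk : k^2 < 1) :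
    criticalPeriodSq k ≤ 8 * π^2 * √(1 - k^2) := by
  set s := √(1 - k^2)
  have hs2 : s^2 = 1 - k^2 := Real.sq_sqrt (by linarith)
  have hkD : k * ellipticD k ≤ ellipticK k := by
    nlinarith [ellipticD_nonneg (k := k), ellipticD_le_ellipticK hk]
  calc criticalPeriodSq k
      = 16 * s^2 * ((ellipticK k - k * ellipticD k) * (ellipticK k + k * ellipticD k)) := by
        rw [criticalPeriodSq, hs2]; ring
    _ ≤ 16 * s^2 * (π/2 * (2 * ellipticK k)) := by
        refine mul_le_mul_of_nonneg_left (mul_le_mul (ellipticK_sub_mul_ellipticD_le hk0 hk)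
          (by linarith) ?_ (by positivity)) (by positivity)
        nlinarith [mul_nonneg hk0 (ellipticD_nonneg (k := k)), pi_pos]
    _ = 16 * π * s * (s * ellipticK k) := by ring
    _ ≤ 16 * π * s * (π/2) := by gcongr; exact sqrt_one_sub_sq_mul_ellipticK_le hk
    _ = 8 * π^2 * s := by ring

lemma continuous_criticalKernel (hk : k^2 < 1) (α : ℝ) :
    Continuous fun β => criticalKernel (k^2) (sin α^2) (sin β^2) :=
  Continuous.div (by fun_prop) (by fun_prop) fun β => (Real.sqrt_pos.2
    (mul_pos (one_sub_sq_mul_sin_sq_pos hk α) (one_sub_sq_mul_sin_sq_pos hk β))).ne'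

lemma integral_criticalKernel (hk : k^2 < 1) (α : ℝ) :
    ∫ β in (0:ℝ)..(π/2), criticalKernel (k^2) (sin α^2) (sin β^2)
      = (1 - k^2) * (ellipticK k - k^2 * sin α^2 * ellipticD k) / √(1 - k^2 * sin α^2) := by
  have hα := one_sub_sq_mul_sin_sq_pos hk α
  calc _ = ∫ β in (0:ℝ)..(π/2), ((1 - k^2) / √(1 - k^2 * sin α^2) * (1 / √(1 - k^2 * sin β^2))
          - (1 - k^2) * k^2 * sin α^2 / √(1 - k^2 * sin α^2)
            * (sin β^2 / √(1 - k^2 * sin β^2))) := by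
        refine integral_congr fun β _ => ?_
        have hβ := one_sub_sq_mul_sin_sq_pos hk β
        rw [criticalKernel, Real.sqrt_mul hα.le]
        field_simp
    _ = _ := by
        rw [integral_eq_mul_ellipticK_sub_mul_ellipticD hk]
        field_simp

lemma continuous_integral_criticalKernel (hk : k^2 < 1) :
    Continuous fun α => ∫ β in (0:ℝ)..(π/2), criticalKernel (k^2) (sin α^2) (sin β^2) := by
  simp_rw [integral_criticalKernel hk]
  exact continuous_div_sqrt_one_sub (by fun_prop) hk

lemma integral_integral_criticalKernel (hk : k^2 < 1) :
    ∫ α in (0:ℝ)..(π/2), ∫ β in (0:ℝ)..(π/2), criticalKernel (k^2) (sin α^2) (sin β^2)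
      = (1 - k^2) * (ellipticK k ^ 2 - k^2 * ellipticD k ^ 2) := by
  simp_rw [integral_criticalKernel hk]
  calc _ = ∫ α in (0:ℝ)..(π/2), ((1 - k^2) * ellipticK k * (1 / √(1 - k^2 * sin α^2))
          - (1 - k^2) * k^2 * ellipticD k * (sin α^2 / √(1 - k^2 * sin α^2))) := by
        refine integral_congr fun α _ => ?_
        field_simp
    _ = _ := by
        rw [integral_eq_mul_ellipticK_sub_mul_ellipticD hk]
        ring

lemma criticalPeriodSq_strictAntiOn : StrictAntiOn criticalPeriodSq (Ico 0 1) := by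
  intro k₁ hk₁ k₂ hk₂ h
  have hsq : ∀ k ∈ Ico (0:ℝ) 1, k^2 ∈ Ico (0:ℝ) 1 := fun k hk =>
    ⟨sq_nonneg k, pow_lt_one₀ hk.1 hk.2 two_ne_zero⟩
  have hsin : ∀ α ∈ Ioo (0:ℝ) (π/2), sin α^2 ∈ Ico (0:ℝ) 1 := fun α hα =>
    ⟨sq_nonneg _, sin_sq_lt_one_of_mem_Ioo ⟨by linarith [hα.1, pi_pos], hα.2⟩⟩
  have hk₁' := (hsq k₁ hk₁).2
  have hk₂' := (hsq k₂ hk₂).2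
  have hlt := integral_lt_integral_of_lt_on_Ioo pi_div_two_pos
    (continuous_integral_criticalKernel hk₂') (continuous_integral_criticalKernel hk₁')
    fun α hα => integral_lt_integral_of_lt_on_Ioo pi_div_two_pos
      (continuous_criticalKernel hk₂' α) (continuous_criticalKernel hk₁' α) fun β hβ =>
      criticalKernel_strictAntiOn (hsin α hα) (hsin β hβ) (hsq k₁ hk₁) (hsq k₂ hk₂)
        (pow_lt_pow_left₀ h hk₁.1 two_ne_zero)
  rw [integral_integral_criticalKernel hk₁', integral_integral_criticalKernel hk₂'] at hlt
  rw [criticalPeriodSq, criticalPeriodSq]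
  linarith

lemma exists_criticalPeriodSq_eq {y : ℝ} (hy : y ∈ Ioo 0 (4 * π^2)) :
    ∃ k ∈ Ioo 0 1, criticalPeriodSq k = y := by
  have hlim : Tendsto (fun k => 8 * π^2 * √(1 - k^2)) (𝓝[<] 1) (𝓝 0) := by
    have : Continuous fun k : ℝ => 8 * π^2 * √(1 - k^2) := by fun_prop
    simpa using (this.tendsto 1).mono_left nhdsWithin_le_nhds
  obtain ⟨b, hby, hb⟩ := ((hlim.eventually (gt_mem_nhds hy.1)).and
    (Ioo_mem_nhdsLT one_pos)).exists
  have hφb : criticalPeriodSq b < y :=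
    (criticalPeriodSq_le_mul_sqrt hb.1.le (pow_lt_one₀ hb.1.le hb.2 two_ne_zero)).trans_lt hby
  have hcont : ContinuousOn criticalPeriodSq (Icc 0 b) :=
    continuousOn_criticalPeriodSq.mono (Icc_subset_Ioo (by norm_num) hb.2)
  obtain ⟨k, hk, hφk⟩ := intermediate_value_Ioo' hb.1.le hcont
    ⟨hφb, criticalPeriodSq_zero ▸ hy.2⟩
  exact ⟨k, ⟨hk.1, hk.2.trans hb.2⟩, hφk⟩

end CriticalPeriod

/-- For every `L ∈ (0,2π)` there is a unique `k₀ ∈ (0,1)` with `r(k₀,L) = 0`;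
moreover `r(k,L) < 0` for `k ∈ (0,k₀)` and `r(k,L) > 0` for `k ∈ (k₀,1)`. -/
theorem rStab_unique_sign_change (L : ℝ) (hL : L ∈ Set.Ioo (0:ℝ) (2 * π)) :
    ∃ k₀ ∈ Set.Ioo (0:ℝ) 1, rStab k₀ L = 0 ∧
      (∀ k ∈ Set.Ioo (0:ℝ) k₀, rStab k L < 0) ∧
      (∀ k ∈ Set.Ioo k₀ (1:ℝ), 0 < rStab k L) ∧
      (∀ k ∈ Set.Ioo (0:ℝ) 1, rStab k L = 0 → k = k₀) := by
  obtain ⟨k₀, hk₀, hφ⟩ := exists_criticalPeriodSq_eq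
    ⟨pow_pos hL.1 2, by nlinarith [hL.1, hL.2, pi_pos]⟩
  have hanti := criticalPeriodSq_strictAntiOn.mono Ioo_subset_Ico_self
  have hr : ∀ k ∈ Ioo (0:ℝ) 1, rStab k L = k^2 * (criticalPeriodSq k₀ - criticalPeriodSq k) :=
    fun k hk => by rw [rStab_eq_sq_mul (pow_lt_one₀ hk.1.le hk.2 two_ne_zero), hφ]
  refine ⟨k₀, hk₀, by simp [hr k₀ hk₀], fun k hk => ?_, fun k hk => ?_, fun k hk hzero => ?_⟩
  · have hk' : k ∈ Ioo (0:ℝ) 1 := ⟨hk.1, hk.2.trans hk₀.2⟩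
    rw [hr k hk']
    exact mul_neg_of_pos_of_neg (pow_pos hk.1 2) (sub_neg.2 (hanti hk' hk₀ hk.2))
  · have hk' : k ∈ Ioo (0:ℝ) 1 := ⟨hk₀.1.trans hk.1, hk.2⟩
    rw [hr k hk']
    exact mul_pos (pow_pos hk'.1 2) (sub_pos.2 (hanti hk₀ hk' hk.1))
  · rw [hr k hk, mul_eq_zero, sub_eq_zero] at hzero
    exact hanti.injOn hk hk₀ (hzero.resolve_left (pow_pos hk.1 2).ne').symm
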